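/- Let (C_i, ι_i) for i = 1, 2 and (C'_i, ι'_i) for i = 1, 2 be ι-complexes with (C_i, ι_i) locally equivalent to (C'_i, ι'_i) for each i. Then the tensor products (C₁ ⊗_{𝔽₂[U]} C₂, ι₁⊗ι₂) and (C'₁ ⊗_{𝔽₂[U]} C'₂, ι'₁⊗ι'₂) are locally equivalent. -/

import Mathlib

set_option maxHeartbeats 1000000


open Polynomial

noncomputable section

abbrev F2 : Type := ZMod 2
abbrev F2U : Type := Polynomial F2

/-- Homology of a module endomorphism viewed as a differential. -/
abbrev Hmlgy {M : Type} [AddCommGroup M] [Module F2U M] (f : M →ₗ[F2U] M) : Type :=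
  ↥(LinearMap.ker f) ⧸ (LinearMap.range f).comap (LinearMap.ker f).subtype

/-- An ι-complex: a ℚ-graded, finitely generated, free chain complex `C` over `𝔽₂[U]`
(`deg U = −2`), supported in gradings differing from some `τ ∈ ℚ` by integers, with
`U⁻¹H_*(C) ≅ 𝔽₂[U,U⁻¹]` (expressed by the `tail` field: there is a `U`-nontorsion cycle
`z` such that any `U`-nontorsion cycle agrees with a `U`-power of `z` up to `U`-powers
and boundaries), together with a grading-preserving chain map `ι` with `ι²` chain
homotopic to the identity (over `𝔽₂`, signs are irrelevant). -/
structure IotaCx where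
  C : Type
  [acg : AddCommGroup C]
  [mod : Module F2U C]
  d : C →ₗ[F2U] C
  iota : C →ₗ[F2U] C
  gr : ℚ → AddSubgroup C
  dd : d ∘ₗ d = 0
  chain : d ∘ₗ iota = iota ∘ₗ d
  internal : DirectSum.IsInternal fun g : ℚ => AddSubgroup.toIntSubmodule (gr g)
  d_homog : ∀ g : ℚ, ∀ x ∈ gr g, d x ∈ gr (g - 1)
  iota_homog : ∀ g : ℚ, ∀ x ∈ gr g, iota x ∈ gr g
  U_homog : ∀ g : ℚ, ∀ x ∈ gr g, (X : F2U) • x ∈ gr (g - 2)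
  free : Module.Free F2U C
  fg : Module.Finite F2U C
  tau : ℚ
  tau_supp : ∀ g : ℚ, gr g ≠ ⊥ → ∃ k : ℤ, g = tau + k
  iota_sq : ∃ H : C →ₗ[F2U] C,
    iota ∘ₗ iota + LinearMap.id = d ∘ₗ H + H ∘ₗ d
  tail : ∃ z : C, d z = 0 ∧ (∀ n : ℕ, (X : F2U) ^ n • z ∉ LinearMap.range d) ∧
    ∀ w : C, d w = 0 → (∀ n : ℕ, (X : F2U) ^ n • w ∉ LinearMap.range d) →
      ∃ a b : ℕ, (X : F2U) ^ a • z + (X : F2U) ^ b • w ∈ LinearMap.range d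

attribute [instance] IotaCx.acg IotaCx.mod

namespace IotaCx

variable (A : IotaCx)

/-- The differential `∂' = ∂ + Q(1+ι)` of the involutive complex
`I⁻(C, ι) = Cone(Q(1+ι) : C → Q·C[−1])`, on `C × Q·C`. -/
def coneD : (A.C × A.C) →ₗ[F2U] (A.C × A.C) :=
  (A.d ∘ₗ LinearMap.fst F2U A.C A.C).prod
    (LinearMap.fst F2U A.C A.C + A.iota ∘ₗ LinearMap.fst F2U A.C A.C
      + A.d ∘ₗ LinearMap.snd F2U A.C A.C)

/-- Multiplication by `Q` on the involutive complex: `(x, Qy) ↦ (0, Qx)`. -/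
def coneQ : (A.C × A.C) →ₗ[F2U] (A.C × A.C) :=
  (0 : (A.C × A.C) →ₗ[F2U] A.C).prod (LinearMap.fst F2U A.C A.C)

/-- The class `z` of the involutive homology `HI⁻ = H(Cone(Q(1+ι)))` lies in grading `r`:
it is represented by a cycle `(x, Qy)` with `x` of degree `r` and `y` of degree `r+1`
(so that `Qy` has degree `r`). -/
def HIgrade (r : ℚ) (z : Hmlgy A.coneD) : Prop :=
  ∃ c : LinearMap.ker A.coneD, c.val.1 ∈ A.gr r ∧ c.val.2 ∈ A.gr (r + 1) ∧
    Submodule.Quotient.mk c = z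

/-- The class `z ∈ HI⁻` lies in the image of (the map on homology induced by) `Q`. -/
def inImQ (z : Hmlgy A.coneD) : Prop :=
  ∃ (c : LinearMap.ker A.coneD) (hq : A.coneQ c.val ∈ LinearMap.ker A.coneD),
    z = Submodule.Quotient.mk (⟨A.coneQ c.val, hq⟩ : LinearMap.ker A.coneD)

/-- The set of gradings `r` of classes `x ∈ HI⁻_r` with `Uⁿx ≠ 0` for all `n` and
`U^m x ∈ Im Q` for some `m`; the invariant `d̄` is the maximum of this set plus `2`. -/
def dbarSet : Set ℚ :=
  { r | ∃ z : Hmlgy A.coneD, A.HIgrade r z ∧ (∀ n : ℕ, (X : F2U) ^ n • z ≠ 0) ∧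
      ∃ m : ℕ, A.inImQ ((X : F2U) ^ m • z) }

/-- The set of gradings `r` of classes `x ∈ HI⁻_r` with `Uⁿx ≠ 0` and `Uⁿx ∉ Im Q` for
all `n`; the invariant `d̲` is the maximum of this set plus `1`. -/
def dlowSet : Set ℚ :=
  { r | ∃ z : Hmlgy A.coneD, A.HIgrade r z ∧
      ∀ n : ℕ, (X : F2U) ^ n • z ≠ 0 ∧ ¬ A.inImQ ((X : F2U) ^ n • z) }

/-- The class `z ∈ H_*(C)` lies in grading `r`. -/
def HCgrade (r : ℚ) (z : Hmlgy A.d) : Prop :=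
  ∃ c : LinearMap.ker A.d, c.val ∈ A.gr r ∧ Submodule.Quotient.mk c = z

/-- The set of gradings `r` of classes `x ∈ H_r(C)` with `Uⁿx ≠ 0` for all `n`;
the ordinary correction term `d` is the maximum of this set plus `2`. -/
def dSet : Set ℚ :=
  { r | ∃ z : Hmlgy A.d, A.HCgrade r z ∧ ∀ n : ℕ, (X : F2U) ^ n • z ≠ 0 }

end IotaCx

/-- A local map of ι-complexes: a grading-preserving chain map commuting with the
involutions up to chain homotopy and inducing an isomorphism on homology after
inverting `U` (its kernel and cokernel on homology are `U`-torsion). -/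
def isLocalMap (A B : IotaCx) (F : A.C →ₗ[F2U] B.C) : Prop :=
  F ∘ₗ A.d = B.d ∘ₗ F ∧
  (∀ g : ℚ, ∀ x ∈ A.gr g, F x ∈ B.gr g) ∧
  (∃ H : A.C →ₗ[F2U] B.C, F ∘ₗ A.iota + B.iota ∘ₗ F = B.d ∘ₗ H + H ∘ₗ A.d) ∧
  (∀ z : A.C, A.d z = 0 → F z ∈ LinearMap.range B.d →
    ∃ n : ℕ, (X : F2U) ^ n • z ∈ LinearMap.range A.d) ∧
  (∀ z : B.C, B.d z = 0 →
    ∃ (n : ℕ) (w : A.C), A.d w = 0 ∧ (X : F2U) ^ n • z + F w ∈ LinearMap.range B.d)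

/-- Local equivalence of ι-complexes: local maps in both directions. -/
def LocalEquiv (A B : IotaCx) : Prop :=
  (∃ F, isLocalMap A B F) ∧ (∃ G, isLocalMap B A G)

/-- Equivalence of ι-complexes: grading-preserving chain homotopy equivalences `F`, `G`
which are homotopy inverse to each other and homotopy-commute with the involutions. -/
def IotaEquiv (A B : IotaCx) : Prop :=
  ∃ (F : A.C →ₗ[F2U] B.C) (G : B.C →ₗ[F2U] A.C),
    F ∘ₗ A.d = B.d ∘ₗ F ∧ G ∘ₗ B.d = A.d ∘ₗ G ∧
    (∀ g : ℚ, ∀ x ∈ A.gr g, F x ∈ B.gr g) ∧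
    (∀ g : ℚ, ∀ x ∈ B.gr g, G x ∈ A.gr g) ∧
    (∃ H : A.C →ₗ[F2U] A.C, G ∘ₗ F + LinearMap.id = A.d ∘ₗ H + H ∘ₗ A.d) ∧
    (∃ H : B.C →ₗ[F2U] B.C, F ∘ₗ G + LinearMap.id = B.d ∘ₗ H + H ∘ₗ B.d) ∧
    (∃ H : A.C →ₗ[F2U] B.C, F ∘ₗ A.iota + B.iota ∘ₗ F = B.d ∘ₗ H + H ∘ₗ A.d) ∧
    (∃ H : B.C →ₗ[F2U] A.C, G ∘ₗ B.iota + A.iota ∘ₗ G = A.d ∘ₗ H + H ∘ₗ B.d)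

/-- A monotone graded root `M(h₁,r₁;…;hₘ,rₘ)`: rationals `h₁ > … > hₘ` and
`r₁ < … < rₘ` with `rᵢ ≤ hᵢ`, all congruent modulo `2ℤ`.  It has an infinite stem
topped at degree `rₘ` and, for each `i`, a symmetric pair of leaves of degree `hᵢ`
attached to the stem at degree `rᵢ`. -/
structure MonotoneRoot where
  m : ℕ
  hm : 0 < m
  h : Fin m → ℚ
  r : Fin m → ℚ
  h_anti : StrictAnti h
  r_mono : StrictMono r
  hr : ∀ i, r i ≤ h i
  parity : ∀ i j, ∃ k : ℤ, h i - r j = 2 * k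

namespace MonotoneRoot

variable (M : MonotoneRoot)

/-- Degrees of the `2m` leaves `v₁, …, vₘ, J₀vₘ, …, J₀v₁` of a monotone root,
in left-to-right order. -/
def lDeg (i : ℕ) : ℚ :=
  if h1 : i < M.m then M.h ⟨i, h1⟩
  else if h2 : 2 * M.m - 1 - i < M.m then M.h ⟨2 * M.m - 1 - i, h2⟩ else 0

/-- Degrees of the `2m − 1` angles of a monotone root, in left-to-right order
(the central angle, with index `m − 1`, has degree `rₘ`). -/
def aDeg (i : ℕ) : ℚ :=
  if h1 : i < M.m then M.r ⟨i, h1⟩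
  else if h2 : 2 * M.m - 2 - i < M.m then M.r ⟨2 * M.m - 2 - i, h2⟩ else 0

end MonotoneRoot

/-- `A` is the standard complex, with reflection involution `J₀`, of the graded-root
data with `N` leaves of degrees `L 0, …, L (N-1)` and `N − 1` angles of degrees
`Ad 0, …, Ad (N-2)`: it has an `𝔽₂[U]`-basis of even generators `v i` (of degree `L i`,
which are cycles) and odd generators `a i` (of degree `Ad i + 1`), with
`∂ (a i) = U^{(L i − Ad i)/2} • v i + U^{(L (i+1) − Ad i)/2} • v (i+1)`, and with the
involution given by `ι (v i) = v (N−1−i)`, `ι (a i) = a (N−2−i)`. -/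
def IsStdCxData (A : IotaCx) (N : ℕ) (L Ad : ℕ → ℚ) : Prop :=
  ∃ (v : ℕ → A.C) (a : ℕ → A.C),
    LinearIndependent F2U
      (Sum.elim (fun i : {i : ℕ // i < N} => v i)
        (fun j : {i : ℕ // i + 1 < N} => a j)) ∧
    Submodule.span F2U (v '' {i | i < N} ∪ a '' {i | i + 1 < N}) = ⊤ ∧
    (∀ i, i < N → A.d (v i) = 0) ∧
    (∀ i, i + 1 < N → A.d (a i) =
      (X : F2U) ^ (⌊(L i - Ad i) / 2⌋).toNat • v i
        + (X : F2U) ^ (⌊(L (i + 1) - Ad i) / 2⌋).toNat • v (i + 1)) ∧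
    (∀ i, i < N → A.iota (v i) = v (N - 1 - i)) ∧
    (∀ i, i + 1 < N → A.iota (a i) = a (N - 2 - i)) ∧
    (∀ i, i < N → v i ∈ A.gr (L i)) ∧
    (∀ i, i + 1 < N → a i ∈ A.gr (Ad i + 1))

/-- `A` is (equivalent to) the standard complex of the monotone graded root `M`,
with its reflection involution `J₀`. -/
def IsStandardCx (A : IotaCx) (M : MonotoneRoot) : Prop :=
  IsStdCxData A (2 * M.m) M.lDeg M.aDeg

/-- `T` is the tensor product over `𝔽₂[U]` of the ι-complexes `A 0, …, A (k-1)`: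
there is an `𝔽₂[U]`-linear identification of `T.C` with `⨂_i (A i).C` under which the
differential, the involution (`ι₁ ⊗ ⋯ ⊗ ι_k`) and the grading of `T` are the tensor
product differential, involution and grading. -/
def IsTensorFamily {k : ℕ} (T : IotaCx) (A : Fin k → IotaCx) : Prop :=
  ∃ e : T.C ≃ₗ[F2U] PiTensorProduct F2U fun i => (A i).C,
    (∀ x : (i : Fin k) → (A i).C,
      T.d (e.symm (PiTensorProduct.tprod F2U x)) =
        ∑ i : Fin k, e.symm (PiTensorProduct.tprod F2U
          (Function.update x i ((A i).d (x i))))) ∧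
    (∀ x : (i : Fin k) → (A i).C,
      T.iota (e.symm (PiTensorProduct.tprod F2U x)) =
        e.symm (PiTensorProduct.tprod F2U fun i => (A i).iota (x i))) ∧
    (∀ (g : Fin k → ℚ) (x : (i : Fin k) → (A i).C), (∀ i, x i ∈ (A i).gr (g i)) →
      e.symm (PiTensorProduct.tprod F2U x) ∈ T.gr (∑ i, g i))

/-- `T` is the tensor product over `𝔽₂[U]` of the ι-complexes `A` and `B`,
with involution `ι_A ⊗ ι_B` and the tensor product differential and grading. -/
def IsTensorOf (T A B : IotaCx) : Prop :=
  ∃ e : T.C ≃ₗ[F2U] TensorProduct F2U A.C B.C,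
    (∀ (x : A.C) (y : B.C),
      T.d (e.symm (x ⊗ₜ[F2U] y)) = e.symm ((A.d x) ⊗ₜ[F2U] y + x ⊗ₜ[F2U] (B.d y))) ∧
    (∀ (x : A.C) (y : B.C),
      T.iota (e.symm (x ⊗ₜ[F2U] y)) = e.symm ((A.iota x) ⊗ₜ[F2U] (B.iota y))) ∧
    (∀ (g₁ g₂ : ℚ) (x : A.C) (y : B.C), x ∈ A.gr g₁ → y ∈ B.gr g₂ →
      e.symm (x ⊗ₜ[F2U] y) ∈ T.gr (g₁ + g₂))

/-- `S` is the ι-complex `T` with all gradings shifted up by `t` (so `S = T[−t]`):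
there is an identification of the underlying complexes and involutions under which
the degree-`g` part of `T` is the degree-`(g+t)` part of `S`. -/
def IsShiftOf (S T : IotaCx) (t : ℚ) : Prop :=
  ∃ e : S.C ≃ₗ[F2U] T.C,
    (∀ x : S.C, T.d (e x) = e (S.d x)) ∧
    (∀ x : S.C, T.iota (e x) = e (S.iota x)) ∧
    (∀ (g : ℚ) (x : T.C), x ∈ T.gr g ↔ e.symm x ∈ S.gr (g + t))

-- char 2 lemmas
lemma F2U.two_eq_zero : (1 + 1 : F2U) = 0 := by
  have : ((1:F2) + 1) = 0 := by decide
  rw [← Polynomial.C_1, ← Polynomial.C_add, this, Polynomial.C_0]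

lemma add_self_zero {V : Type} [AddCommGroup V] [Module F2U V] (x : V) : x + x = 0 := by
  have : x + x = (1 + 1 : F2U) • x := by rw [add_smul, one_smul]
  rw [this, F2U.two_eq_zero, zero_smul]

lemma eq_of_add_zero {V : Type} [AddCommGroup V] [Module F2U V] {x y : V} (h : x + y = 0) :
    x = y := by
  have := congrArg (· + y) h
  simpa [add_assoc, add_self_zero] using this
open scoped DirectSum

namespace IotaCx

variable (A : IotaCx)

noncomputable def dec : (⨁ (g : ℚ), (AddSubgroup.toIntSubmodule (A.gr g))) ≃ₗ[ℤ] A.C :=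
  LinearEquiv.ofBijective
    (DirectSum.coeLinearMap fun g : ℚ => AddSubgroup.toIntSubmodule (A.gr g)) A.internal

/-- Projection onto the degree `γ` component. -/
noncomputable def proj (γ : ℚ) : A.C →ₗ[ℤ] A.C :=
  (AddSubgroup.toIntSubmodule (A.gr γ)).subtype ∘ₗ
    (DirectSum.component ℤ ℚ (fun g : ℚ => ↥(AddSubgroup.toIntSubmodule (A.gr g))) γ) ∘ₗ (A.dec.symm : A.C →ₗ[ℤ] _)

lemma proj_apply (γ : ℚ) (x : A.C) : A.proj γ x = ((A.dec.symm x) γ : A.C) := rfl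

lemma proj_mem (γ : ℚ) (x : A.C) : A.proj γ x ∈ A.gr γ := by
  rw [proj_apply]; exact ((A.dec.symm x) γ).2

lemma proj_of_mem_same {g : ℚ} {x : A.C} (h : x ∈ A.gr g) : A.proj g x = x := by
  rw [proj_apply]
  have := DirectSum.IsInternal.ofBijective_coeLinearMap_of_mem A.internal (i := g) (x := x) h
  rw [show A.dec = LinearEquiv.ofBijective (DirectSum.coeLinearMap fun g : ℚ => AddSubgroup.toIntSubmodule (A.gr g)) A.internal from rfl, this]

lemma proj_of_mem_ne {g γ : ℚ} {x : A.C} (h : x ∈ A.gr g) (hne : g ≠ γ) :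
    A.proj γ x = 0 := by
  rw [proj_apply]
  have := DirectSum.IsInternal.ofBijective_coeLinearMap_of_mem_ne A.internal
    (hij := hne) (x := x) h
  rw [show A.dec = LinearEquiv.ofBijective (DirectSum.coeLinearMap fun g : ℚ => AddSubgroup.toIntSubmodule (A.gr g)) A.internal from rfl, this]
  rfl

lemma homog_induction {P : A.C → Prop}
    (hadd : ∀ x y, P x → P y → P (x + y)) (h0 : P 0)
    (hhom : ∀ (g : ℚ) (x : A.C), x ∈ A.gr g → P x) (x : A.C) : P x := by
  have key : ∀ f : (⨁ (g : ℚ), (AddSubgroup.toIntSubmodule (A.gr g))), P (A.dec f) := by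
    intro f
    induction f using DirectSum.induction_on with
    | zero =>
        rw [show (A.dec 0 : A.C) = 0 from map_zero A.dec.toLinearMap]; exact h0
    | of i x =>
        have : A.dec (DirectSum.of _ i x) = (x : A.C) := by
          rw [show A.dec = LinearEquiv.ofBijective (DirectSum.coeLinearMap fun g : ℚ => AddSubgroup.toIntSubmodule (A.gr g)) A.internal from rfl]
          exact DirectSum.coeLinearMap_of (fun g : ℚ => AddSubgroup.toIntSubmodule (A.gr g)) i x
        rw [this]; exact hhom i x x.2
    | add f g hf hg =>
        rw [show (A.dec (f + g) : A.C) = A.dec f + A.dec g from map_add A.dec.toLinearMap f g]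
        exact hadd _ _ hf hg
  have h := key (A.dec.symm x)
  rwa [LinearEquiv.apply_symm_apply] at h

lemma exists_finset_decomp (x : A.C) :
    ∃ s : Finset ℚ, (∀ γ ∉ s, A.proj γ x = 0) ∧ x = ∑ γ ∈ s, A.proj γ x := by
  induction x using A.homog_induction with
  | h0 => exact ⟨∅, by simp, by simp⟩
  | hhom g x hx =>
      refine ⟨{g}, ?_, ?_⟩
      · intro γ hγ
        exact A.proj_of_mem_ne hx (by simpa [eq_comm] using hγ)
      · simp [A.proj_of_mem_same hx]
  | hadd x y hx hy =>
      obtain ⟨s, hs0, hs⟩ := hx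
      obtain ⟨t, ht0, ht⟩ := hy
      refine ⟨s ∪ t, ?_, ?_⟩
      · intro γ hγ
        simp only [Finset.mem_union, not_or] at hγ
        rw [map_add, hs0 γ hγ.1, ht0 γ hγ.2, add_zero]
      · conv_lhs => rw [hs, ht]
        simp only [map_add, Finset.sum_add_distrib]
        congr 1
        · exact Finset.sum_subset Finset.subset_union_left (fun γ _ hγ => hs0 γ hγ)
        · exact Finset.sum_subset Finset.subset_union_right (fun γ _ hγ => ht0 γ hγ)

end IotaCx
namespace IotaCx

variable (A : IotaCx)

lemma proj_d (γ : ℚ) (x : A.C) : A.proj γ (A.d x) = A.d (A.proj (γ + 1) x) := by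
  induction x using A.homog_induction with
  | h0 => simp
  | hadd x y hx hy => rw [map_add, map_add, map_add, map_add, hx, hy]
  | hhom g x hx =>
      have hdx : A.d x ∈ A.gr (g - 1) := A.d_homog g x hx
      by_cases hg : g = γ + 1
      · subst hg
        rw [A.proj_of_mem_same hx]
        have : (γ : ℚ) + 1 - 1 = γ := by ring
        rw [this] at hdx
        rw [A.proj_of_mem_same hdx]
      · rw [A.proj_of_mem_ne hx hg, map_zero, A.proj_of_mem_ne hdx (by
          intro h; exact hg (by linarith [h]))]

lemma pow_smul_mem {g : ℚ} {x : A.C} (hx : x ∈ A.gr g) (n : ℕ) :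
    (X : F2U) ^ n • x ∈ A.gr (g - 2 * n) := by
  induction n with
  | zero => simpa using hx
  | succ n ih =>
      have h2 : (X : F2U) ^ (n + 1) • x = (X : F2U) • ((X : F2U) ^ n • x) := by
        rw [pow_succ', mul_smul]
      rw [h2]
      have := A.U_homog _ _ ih
      have heq : g - 2 * (n : ℚ) - 2 = g - 2 * ((n : ℕ) + 1 : ℕ) := by push_cast; ring
      rwa [heq] at this

lemma exists_homog_nontorsion :
    ∃ (g : ℚ) (z₀ : A.C), z₀ ∈ A.gr g ∧ A.d z₀ = 0 ∧
      ∀ n : ℕ, (X : F2U) ^ n • z₀ ∉ LinearMap.range A.d := by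
  obtain ⟨z, hzc, hznt, -⟩ := A.tail
  by_contra hcon
  push_neg at hcon
  obtain ⟨s, hs0, hs⟩ := A.exists_finset_decomp z
  -- each component is a cycle
  have hcyc : ∀ γ : ℚ, A.d (A.proj γ z) = 0 := by
    intro γ
    have := A.proj_d (γ - 1) z
    rw [hzc, map_zero] at this
    have heq : (γ : ℚ) - 1 + 1 = γ := by ring
    rw [heq] at this
    exact this.symm
  -- each component is torsion
  have htor : ∀ γ ∈ s, ∃ n : ℕ, (X : F2U) ^ n • A.proj γ z ∈ LinearMap.range A.d := by
    intro γ _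
    obtain ⟨n, hn⟩ := hcon γ (A.proj γ z) (A.proj_mem γ z) (hcyc γ)
    exact ⟨n, hn⟩
  choose nn hnn using htor
  classical
  set N : ℕ := ∑ γ ∈ s.attach, nn γ.1 γ.2 with hN
  apply hznt N
  have : (X : F2U) ^ N • z = ∑ γ ∈ s.attach, (X : F2U) ^ N • A.proj γ.1 z := by
    conv_lhs => rw [hs]
    rw [Finset.smul_sum, ← Finset.sum_attach s (fun γ => (X : F2U) ^ N • A.proj γ z)]
  rw [this]
  apply Submodule.sum_mem
  intro γ _
  have hle : nn γ.1 γ.2 ≤ N := Finset.single_le_sum (f := fun γ : {x // x ∈ s} => nn γ.1 γ.2)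
    (fun _ _ => Nat.zero_le _) (Finset.mem_attach s γ)
  have : (X : F2U) ^ N • A.proj γ.1 z
      = (X : F2U) ^ (N - nn γ.1 γ.2) • ((X : F2U) ^ (nn γ.1 γ.2) • A.proj γ.1 z) := by
    rw [smul_smul, ← pow_add, Nat.sub_add_cancel hle]
  rw [this]
  exact Submodule.smul_mem _ _ (hnn γ.1 γ.2)

lemma homog_ann {g : ℚ} {z₀ : A.C} (h0 : z₀ ∈ A.gr g)
    (hnt : ∀ n : ℕ, (X : F2U) ^ n • z₀ ∉ LinearMap.range A.d) :
    ∀ r : F2U, r • z₀ ∈ LinearMap.range A.d → r = 0 := by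
  intro r hr
  by_contra hr0
  obtain ⟨i, hi⟩ := Polynomial.support_nonempty.mpr hr0
  apply hnt i
  -- rewrite r • z₀ as a sum of monomial smuls
  have hco : ∀ j ∈ r.support, Polynomial.monomial j (r.coeff j) = (X : F2U) ^ j := by
    intro j hj
    have h1 : r.coeff j = 1 := by
      have := Polynomial.mem_support_iff.mp hj
      revert this; generalize r.coeff j = a; revert a; decide
    rw [h1, ← Polynomial.X_pow_eq_monomial]
  have hsum : r • z₀ = ∑ j ∈ r.support, (X : F2U) ^ j • z₀ := by
    conv_lhs => rw [Polynomial.as_sum_support r]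
    rw [Finset.sum_smul]
    exact Finset.sum_congr rfl fun j hj => by rw [hco j hj]
  -- project to degree g - 2i
  have hproj : A.proj (g - 2 * i) (r • z₀) = (X : F2U) ^ i • z₀ := by
    rw [hsum, map_sum]
    rw [Finset.sum_eq_single i]
    · exact A.proj_of_mem_same (A.pow_smul_mem h0 i)
    · intro j _ hji
      refine A.proj_of_mem_ne (A.pow_smul_mem h0 j) ?_
      intro h
      apply hji
      have : (2 : ℚ) * j = 2 * i := by linarith [h]
      exact_mod_cast (by linarith [this] : (j : ℚ) = i)
    · intro h; exact absurd hi h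
  obtain ⟨u, hu⟩ := hr
  rw [← hproj, ← hu, A.proj_d]
  exact ⟨_, rfl⟩

lemma tail_rel {z₁ : A.C} (h1 : A.d z₁ = 0)
    (hnt : ∀ n : ℕ, (X : F2U) ^ n • z₁ ∉ LinearMap.range A.d) :
    ∀ w : A.C, A.d w = 0 →
      ∃ (m : ℕ) (c : F2U), (X : F2U) ^ m • w + c • z₁ ∈ LinearMap.range A.d := by
  intro w hw
  obtain ⟨z, hzc, hznt, hztail⟩ := A.tail
  by_cases hwt : ∃ n : ℕ, (X : F2U) ^ n • w ∈ LinearMap.range A.d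
  · obtain ⟨n, hn⟩ := hwt
    exact ⟨n, 0, by simpa using hn⟩
  · push_neg at hwt
    obtain ⟨a, b, hab⟩ := hztail w hw hwt
    obtain ⟨a', b', hab'⟩ := hztail z₁ h1 hnt
    refine ⟨a' + b, (X : F2U) ^ (a + b'), ?_⟩
    have key : (X : F2U) ^ (a' + b) • w + (X : F2U) ^ (a + b') • z₁
        = (X : F2U) ^ a' • ((X : F2U) ^ a • z + (X : F2U) ^ b • w)
          + (X : F2U) ^ a • ((X : F2U) ^ a' • z + (X : F2U) ^ b' • z₁) := by
      rw [smul_add, smul_add, smul_smul, smul_smul, smul_smul, smul_smul,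
        ← pow_add, ← pow_add, ← pow_add, ← pow_add]
      rw [show a' + a = a + a' from by ring]
      abel_nf
      simp [two_zsmul, two_nsmul, add_self_zero]
    rw [key]
    exact Submodule.add_mem _ (Submodule.smul_mem _ _ hab) (Submodule.smul_mem _ _ hab')

end IotaCx
open TensorProduct in
lemma tensor_nontorsion
    {M N : Type} [AddCommGroup M] [Module F2U M] [AddCommGroup N] [Module F2U N]
    [Module.Free F2U N] [Module.Finite F2U N]
    (d₁ : M →ₗ[F2U] M) (d₂ : N →ₗ[F2U] N) (hd₂ : d₂ ∘ₗ d₂ = 0)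
    (z₁ : M) (hann : ∀ r : F2U, r • z₁ ∈ LinearMap.range d₁ → r = 0)
    (hrel : ∀ w : M, d₁ w = 0 →
      ∃ (m : ℕ) (c : F2U), (X : F2U) ^ m • w + c • z₁ ∈ LinearMap.range d₁)
    (z₂ : N) (hz₂c : d₂ z₂ = 0)
    (hz₂ : ∀ n : ℕ, (X : F2U) ^ n • z₂ ∉ LinearMap.range d₂) (n : ℕ) :
    (X : F2U) ^ n • (z₁ ⊗ₜ[F2U] z₂) ∉
      LinearMap.range (LinearMap.rTensor N d₁ + LinearMap.lTensor M d₂) := by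
  classical
  intro hmem
  obtain ⟨w, hw⟩ := hmem
  obtain ⟨o, snf⟩ := (LinearMap.ker d₂).smithNormalForm
    (Module.Free.chooseBasis F2U N)
  set ι := Module.Free.ChooseBasisIndex F2U N with hι
  set bM := snf.bM with hbM
  set p : ι → F2U := fun i => bM.repr z₂ i with hp
  set q : ι → ι → F2U := fun k i => bM.repr (d₂ (bM k)) i with hq
  set φ : ι → (M ⊗[F2U] N →ₗ[F2U] M) := fun i =>
    (TensorProduct.rid F2U M).toLinearMap ∘ₗ LinearMap.lTensor M (bM.coord i) with hφ
  have hd₂d₂ : ∀ x : N, d₂ (d₂ x) = 0 := fun x => by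
    have := LinearMap.ext_iff.mp hd₂ x; simpa using this
  have φ_tmul : ∀ (i : ι) (m : M) (v : N), φ i (m ⊗ₜ[F2U] v) = bM.repr v i • m := by
    intro i m v
    simp [hφ, Module.Basis.coord_apply]
  -- q vanishes for target index outside the range of f
  have hqz : ∀ (k i : ι), i ∉ Set.range snf.f → q k i = 0 := by
    intro k i hi
    exact snf.repr_eq_zero_of_notMem_range
      (m := ⟨d₂ (bM k), by simp [LinearMap.mem_ker, hd₂d₂]⟩) hi
  have hpz : ∀ i : ι, i ∉ Set.range snf.f → p i = 0 := by
    intro i hi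
    exact snf.repr_eq_zero_of_notMem_range (m := ⟨z₂, by simp [LinearMap.mem_ker, hz₂c]⟩) hi
  -- basis vectors indexed by the range of f are cycles
  have hcycbasis : ∀ k : ι, k ∈ Set.range snf.f → d₂ (bM k) = 0 := by
    rintro k ⟨j, rfl⟩
    have h1 : (snf.bN j : N) = snf.a j • bM (snf.f j) := snf.snf j
    have h2 : d₂ ((snf.bN j : N)) = 0 := (snf.bN j).2
    rw [h1, map_smul] at h2
    have ha : snf.a j ≠ 0 := by
      intro h0
      apply Module.Basis.ne_zero snf.bN j
      have : (snf.bN j : N) = 0 := by rw [h1, h0, zero_smul]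
      exact Subtype.ext this
    exact (smul_eq_zero.mp h2).resolve_left ha
  -- the key coordinate identity
  have key : ∀ (i : ι) (u : M ⊗[F2U] N),
      φ i ((LinearMap.rTensor N d₁ + LinearMap.lTensor M d₂) u)
        = d₁ (φ i u) + ∑ k : ι, q k i • φ k u := by
    intro i u
    induction u using TensorProduct.induction_on with
    | zero => simp
    | add u v hu hv =>
        rw [map_add, map_add, hu, hv, map_add (φ i), map_add]
        rw [show (∑ k : ι, q k i • φ k (u + v)) = (∑ k : ι, q k i • φ k u)
            + (∑ k : ι, q k i • φ k v) from by
          rw [← Finset.sum_add_distrib]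
          exact Finset.sum_congr rfl fun k _ => by rw [map_add, smul_add]]
        abel
    | tmul m v =>
        simp only [LinearMap.add_apply, LinearMap.rTensor_tmul, LinearMap.lTensor_tmul, map_add,
          φ_tmul, map_smul, smul_smul]
        congr 1
        rw [← Finset.sum_smul]
        congr 1
        have hv : d₂ v = ∑ k : ι, bM.repr v k • d₂ (bM k) := by
          conv_lhs => rw [← Module.Basis.sum_repr bM v]
          rw [map_sum]
          exact Finset.sum_congr rfl fun k _ => by rw [map_smul]
        rw [hv, map_sum, Finsupp.finset_sum_apply]
        exact Finset.sum_congr rfl fun k _ => by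
          rw [map_smul, Finsupp.smul_apply, smul_eq_mul, mul_comm]
  set y : ι → M := fun i => φ i w with hy
  have heq : ∀ i : ι, ((X : F2U) ^ n * p i) • z₁ = d₁ (y i) + ∑ k : ι, q k i • y k := by
    intro i
    have h0 := key i w
    rw [hw, map_smul, φ_tmul, smul_smul] at h0
    exact h0
  have hcyc : ∀ i ∉ Set.range snf.f, d₁ (y i) = 0 := by
    intro i hi
    have h0 := heq i
    rw [hpz i hi, mul_zero, zero_smul] at h0
    rw [show (∑ k : ι, q k i • y k) = 0 from Finset.sum_eq_zero fun k _ => by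
      rw [hqz k i hi, zero_smul]] at h0
    simpa using h0.symm
  have hch : ∀ k : ι, ∃ (m : ℕ) (c : F2U), ∀ i : ι,
      q k i • ((X : F2U) ^ m • y k) + (q k i * c) • z₁ ∈ LinearMap.range d₁ := by
    intro k
    by_cases hk : k ∈ Set.range snf.f
    · refine ⟨0, 0, fun i => ?_⟩
      have h0 : q k i = 0 := by rw [hq]; simp [hcycbasis k hk]
      rw [h0]; simp
    · obtain ⟨m, c, hmcc⟩ := hrel (y k) (hcyc k hk)
      refine ⟨m, c, fun i => ?_⟩
      have h0 := Submodule.smul_mem _ (q k i) hmcc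
      rwa [smul_add, smul_smul (q k i) c] at h0
  choose mm cc hmc using hch
  set Mx : ℕ := ∑ k : ι, mm k with hMx
  have hle : ∀ k : ι, mm k ≤ Mx :=
    fun k => Finset.single_le_sum (fun _ _ => Nat.zero_le _) (Finset.mem_univ k)
  have hsc : ∀ i : ι, (X : F2U) ^ (n + Mx) * p i
      = ∑ k : ι, (X : F2U) ^ (Mx - mm k) * (q k i * cc k) := by
    intro i
    have e1 : ((X : F2U) ^ (n + Mx) * p i
        + ∑ k : ι, (X : F2U) ^ (Mx - mm k) * (q k i * cc k)) • z₁
        = d₁ ((X : F2U) ^ Mx • y i)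
          + ∑ k : ι, (X : F2U) ^ (Mx - mm k)
              • (q k i • ((X : F2U) ^ (mm k) • y k) + (q k i * cc k) • z₁) := by
      rw [add_smul, Finset.sum_smul]
      have e2 : ((X : F2U) ^ (n + Mx) * p i) • z₁
          = (X : F2U) ^ Mx • (((X : F2U) ^ n * p i) • z₁) := by
        rw [smul_smul, ← mul_assoc, ← pow_add, Nat.add_comm Mx n]
      rw [e2, heq i, smul_add, Finset.smul_sum, ← map_smul d₁, add_assoc]
      congr 1
      rw [← Finset.sum_add_distrib]
      refine Finset.sum_congr rfl fun k _ => ?_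
      rw [smul_add]
      congr 1
      · rw [smul_smul, smul_smul, smul_smul]
        congr 1
        conv_rhs => rw [mul_right_comm]
        rw [← pow_add, Nat.sub_add_cancel (hle k)]
      · rw [smul_smul]
    have hmem2 : ((X : F2U) ^ (n + Mx) * p i
        + ∑ k : ι, (X : F2U) ^ (Mx - mm k) * (q k i * cc k)) • z₁
        ∈ LinearMap.range d₁ := by
      rw [e1]
      apply Submodule.add_mem
      · exact ⟨_, rfl⟩
      · exact Submodule.sum_mem _ fun k _ => Submodule.smul_mem _ _ (hmc k i)
    exact eq_of_add_zero (hann _ hmem2)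
  apply hz₂ (n + Mx)
  have hz₂eq : (X : F2U) ^ (n + Mx) • z₂
      = d₂ (∑ k : ι, ((X : F2U) ^ (Mx - mm k) * cc k) • bM k) := by
    conv_lhs => rw [← Module.Basis.sum_repr bM z₂, Finset.smul_sum]
    rw [map_sum]
    calc ∑ i : ι, (X : F2U) ^ (n + Mx) • (bM.repr z₂ i • bM i)
        = ∑ i : ι, ((X : F2U) ^ (n + Mx) * p i) • bM i := by
          refine Finset.sum_congr rfl fun i _ => by rw [smul_smul]
      _ = ∑ i : ι, ∑ k : ι, ((X : F2U) ^ (Mx - mm k) * (q k i * cc k)) • bM i := by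
          refine Finset.sum_congr rfl fun i _ => by rw [hsc i, Finset.sum_smul]
      _ = ∑ k : ι, ∑ i : ι, ((X : F2U) ^ (Mx - mm k) * (q k i * cc k)) • bM i :=
          Finset.sum_comm
      _ = ∑ k : ι, d₂ (((X : F2U) ^ (Mx - mm k) * cc k) • bM k) := by
          refine Finset.sum_congr rfl fun k _ => ?_
          rw [map_smul]
          have h0 : d₂ (bM k) = ∑ i : ι, q k i • bM i :=
            (Module.Basis.sum_repr bM (d₂ (bM k))).symm
          rw [h0, Finset.smul_sum]
          refine Finset.sum_congr rfl fun i _ => ?_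
          rw [smul_smul]
          congr 1
          ring
  rw [hz₂eq]
  exact ⟨_, rfl⟩
section Transfer

variable (T A B : IotaCx) (e : T.C ≃ₗ[F2U] TensorProduct F2U A.C B.C)

lemma tensor_d_formula
    (hd : ∀ (x : A.C) (y : B.C), T.d (e.symm (x ⊗ₜ[F2U] y))
      = e.symm ((A.d x) ⊗ₜ[F2U] y + x ⊗ₜ[F2U] (B.d y))) :
    ∀ u : TensorProduct F2U A.C B.C, T.d (e.symm u)
      = e.symm ((LinearMap.rTensor B.C A.d + LinearMap.lTensor A.C B.d) u) := by
  intro u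
  induction u using TensorProduct.induction_on with
  | zero => simp
  | add u v hu hv => rw [map_add, map_add, map_add, hu, hv, ← map_add]
  | tmul x y =>
      rw [hd x y, LinearMap.add_apply, LinearMap.rTensor_tmul, LinearMap.lTensor_tmul]

lemma tensor_iota_formula
    (hi : ∀ (x : A.C) (y : B.C), T.iota (e.symm (x ⊗ₜ[F2U] y))
      = e.symm ((A.iota x) ⊗ₜ[F2U] (B.iota y))) :
    ∀ u : TensorProduct F2U A.C B.C, T.iota (e.symm u)
      = e.symm (TensorProduct.map A.iota B.iota u) := by
  intro u
  induction u using TensorProduct.induction_on with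
  | zero => simp
  | add u v hu hv => rw [map_add, map_add, map_add, hu, hv, ← map_add]
  | tmul x y => rw [hi x y, TensorProduct.map_tmul]

lemma tensor_range_transfer
    (hd : ∀ (x : A.C) (y : B.C), T.d (e.symm (x ⊗ₜ[F2U] y))
      = e.symm ((A.d x) ⊗ₜ[F2U] y + x ⊗ₜ[F2U] (B.d y))) :
    ∀ v : T.C, v ∈ LinearMap.range T.d
      ↔ e v ∈ LinearMap.range (LinearMap.rTensor B.C A.d + LinearMap.lTensor A.C B.d) := by
  intro v
  constructor
  · rintro ⟨t, rfl⟩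
    refine ⟨e t, ?_⟩
    have := tensor_d_formula T A B e hd (e t)
    rw [e.symm_apply_apply] at this
    rw [this, e.apply_symm_apply]
  · rintro ⟨u, hu⟩
    refine ⟨e.symm u, ?_⟩
    rw [tensor_d_formula T A B e hd u, hu, e.symm_apply_apply]

lemma tensor_nontorsion_transfer
    (hd : ∀ (x : A.C) (y : B.C), T.d (e.symm (x ⊗ₜ[F2U] y))
      = e.symm ((A.d x) ⊗ₜ[F2U] y + x ⊗ₜ[F2U] (B.d y)))
    (z₁ : A.C) (hann : ∀ r : F2U, r • z₁ ∈ LinearMap.range A.d → r = 0)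
    (hrel : ∀ w : A.C, A.d w = 0 →
      ∃ (m : ℕ) (c : F2U), (X : F2U) ^ m • w + c • z₁ ∈ LinearMap.range A.d)
    (z₂ : B.C) (hz₂c : B.d z₂ = 0)
    (hz₂ : ∀ n : ℕ, (X : F2U) ^ n • z₂ ∉ LinearMap.range B.d) :
    ∀ n : ℕ, (X : F2U) ^ n • e.symm (z₁ ⊗ₜ[F2U] z₂) ∉ LinearMap.range T.d := by
  intro n hn
  haveI := B.free
  haveI := B.fg
  have h1 := (tensor_range_transfer T A B e hd _).mp hn
  rw [map_smul, e.apply_symm_apply] at h1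
  exact tensor_nontorsion A.d B.d B.dd z₁ hann hrel z₂ hz₂c hz₂ n h1

end Transfer
lemma two_zsmul_zero {V : Type} [AddCommGroup V] [Module F2U V] (x : V) : (2 : ℤ) • x = 0 := by
  rw [two_zsmul]; exact add_self_zero x

lemma two_nsmul_zero {V : Type} [AddCommGroup V] [Module F2U V] (x : V) : (2 : ℕ) • x = 0 := by
  rw [two_nsmul]; exact add_self_zero x

open TensorProduct in
lemma tensor_local (A₁ A₂ B₁ B₂ T T' : IotaCx)
    (F₁ : A₁.C →ₗ[F2U] B₁.C) (F₂ : A₂.C →ₗ[F2U] B₂.C)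
    (h₁ : isLocalMap A₁ B₁ F₁) (h₂ : isLocalMap A₂ B₂ F₂)
    (hT : IsTensorOf T A₁ A₂) (hT' : IsTensorOf T' B₁ B₂) :
    ∃ F, isLocalMap T T' F := by
  classical
  obtain ⟨e, hTd, hTi, hTg⟩ := hT
  obtain ⟨e', hTd', hTi', hTg'⟩ := hT'
  obtain ⟨hc₁, hg₁, ⟨H₁, hh₁⟩, h4₁, h5₁⟩ := h₁
  obtain ⟨hc₂, hg₂, ⟨H₂, hh₂⟩, h4₂, h5₂⟩ := h₂
  set Fm : T.C →ₗ[F2U] T'.C :=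
    e'.symm.toLinearMap ∘ₗ TensorProduct.map F₁ F₂ ∘ₗ e.toLinearMap with hFm
  have hFsymm : ∀ u, Fm (e.symm u) = e'.symm (TensorProduct.map F₁ F₂ u) := by
    intro u; simp [hFm]
  have hFtmul : ∀ (x : A₁.C) (y : A₂.C),
      Fm (e.symm (x ⊗ₜ[F2U] y)) = e'.symm ((F₁ x) ⊗ₜ[F2U] (F₂ y)) := by
    intro x y; rw [hFsymm, TensorProduct.map_tmul]
  -- chain map property
  have hchain : Fm ∘ₗ T.d = T'.d ∘ₗ Fm := by
    apply LinearMap.ext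
    intro t
    obtain ⟨u, rfl⟩ : ∃ u, t = e.symm u := ⟨e t, (e.symm_apply_apply t).symm⟩
    simp only [LinearMap.comp_apply]
    rw [tensor_d_formula T A₁ A₂ e hTd u, hFsymm, hFsymm,
      tensor_d_formula T' B₁ B₂ e' hTd' (TensorProduct.map F₁ F₂ u)]
    congr 1
    have hkey : (TensorProduct.map F₁ F₂) ∘ₗ
        (LinearMap.rTensor A₂.C A₁.d + LinearMap.lTensor A₁.C A₂.d)
        = (LinearMap.rTensor B₂.C B₁.d + LinearMap.lTensor B₁.C B₂.d) ∘ₗ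
          (TensorProduct.map F₁ F₂) := by
      apply TensorProduct.ext'
      intro x y
      simp only [LinearMap.comp_apply, LinearMap.add_apply, LinearMap.rTensor_tmul,
        LinearMap.lTensor_tmul, TensorProduct.map_tmul, map_add]
      rw [show F₁ (A₁.d x) = B₁.d (F₁ x) from LinearMap.congr_fun hc₁ x,
        show F₂ (A₂.d y) = B₂.d (F₂ y) from LinearMap.congr_fun hc₂ y]
    exact LinearMap.congr_fun hkey u
  -- grading
  have hgr : ∀ g : ℚ, ∀ t ∈ T.gr g, Fm t ∈ T'.gr g := by
    set W : ℚ → AddSubgroup T.C := fun g => AddSubgroup.closure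
      {t | ∃ (γ₁ γ₂ : ℚ) (x : A₁.C) (y : A₂.C), γ₁ + γ₂ = g ∧ x ∈ A₁.gr γ₁ ∧ y ∈ A₂.gr γ₂
        ∧ t = e.symm (x ⊗ₜ[F2U] y)} with hW
    have hWsub : ∀ γ, W γ ≤ T.gr γ := by
      intro γ
      rw [hW]
      apply (AddSubgroup.closure_le _).mpr
      rintro t ⟨γ₁, γ₂, x, y, hsum, hx, hy, rfl⟩
      have := hTg γ₁ γ₂ x y hx hy
      rwa [hsum] at this
    have hmapW : ∀ γ, ∀ t ∈ W γ, Fm t ∈ T'.gr γ := by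
      intro γ
      have hle : W γ ≤ (T'.gr γ).comap Fm.toAddMonoidHom := by
        rw [hW]
        apply (AddSubgroup.closure_le _).mpr
        rintro t ⟨γ₁, γ₂, x, y, hsum, hx, hy, rfl⟩
        have : Fm (e.symm (x ⊗ₜ[F2U] y)) ∈ T'.gr (γ₁ + γ₂) := by
          rw [hFtmul]
          exact hTg' γ₁ γ₂ _ _ (hg₁ γ₁ x hx) (hg₂ γ₂ y hy)
        rw [hsum] at this
        exact this
      intro t ht
      exact hle ht
    set Pt : T.C → Prop := fun t => ∃ (s : Finset ℚ) (w : ℚ → T.C),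
      (∀ γ, w γ ∈ W γ) ∧ (∀ γ ∉ s, w γ = 0) ∧ t = ∑ γ ∈ s, w γ with hPt
    have hP0 : Pt 0 := ⟨∅, fun _ => 0, fun γ => (W γ).zero_mem, fun _ _ => rfl, by simp⟩
    have hPadd : ∀ a b : T.C, Pt a → Pt b → Pt (a + b) := by
      rintro a b ⟨s₁, w₁, hw₁, hn₁, he₁⟩ ⟨s₂, w₂, hw₂, hn₂, he₂⟩
      refine ⟨s₁ ∪ s₂, fun γ => w₁ γ + w₂ γ,
        fun γ => (W γ).add_mem (hw₁ γ) (hw₂ γ), fun γ hγ => ?_, ?_⟩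
      · simp only [Finset.mem_union, not_or] at hγ
        show w₁ γ + w₂ γ = 0
        rw [hn₁ γ hγ.1, hn₂ γ hγ.2, add_zero]
      · show a + b = ∑ γ ∈ s₁ ∪ s₂, (w₁ γ + w₂ γ)
        rw [he₁, he₂,
          Finset.sum_subset Finset.subset_union_left (fun γ _ h => hn₁ γ h),
          Finset.sum_subset Finset.subset_union_right (fun γ _ h => hn₂ γ h),
          ← Finset.sum_add_distrib]
    have hPhom : ∀ (γ₁ γ₂ : ℚ) (x : A₁.C) (y : A₂.C), x ∈ A₁.gr γ₁ → y ∈ A₂.gr γ₂ →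
        Pt (e.symm (x ⊗ₜ[F2U] y)) := by
      intro γ₁ γ₂ x y hx hy
      refine ⟨{γ₁ + γ₂}, fun γ => if γ = γ₁ + γ₂ then e.symm (x ⊗ₜ[F2U] y) else 0,
        fun γ => ?_, fun γ hγ => ?_, ?_⟩
      · by_cases h : γ = γ₁ + γ₂
        · simp only [h, if_pos rfl]
          exact AddSubgroup.subset_closure ⟨γ₁, γ₂, x, y, rfl, hx, hy, rfl⟩
        · simp only [if_neg h]
          exact (W γ).zero_mem
      · simp only [Finset.mem_singleton] at hγ
        simp [if_neg hγ]
      · simp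
    have hdec : ∀ t : T.C, Pt t := by
      intro t
      obtain ⟨u, rfl⟩ : ∃ u, t = e.symm u := ⟨e t, (e.symm_apply_apply t).symm⟩
      induction u using TensorProduct.induction_on with
      | zero => rw [map_zero]; exact hP0
      | add u v hu hv => rw [map_add]; exact hPadd _ _ hu hv
      | tmul x y =>
          obtain ⟨s₁, hs₁0, hs₁⟩ := A₁.exists_finset_decomp x
          obtain ⟨s₂, hs₂0, hs₂⟩ := A₂.exists_finset_decomp y
          have hxy : e.symm (x ⊗ₜ[F2U] y) = ∑ γ₁ ∈ s₁, ∑ γ₂ ∈ s₂,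
              e.symm ((A₁.proj γ₁ x) ⊗ₜ[F2U] (A₂.proj γ₂ y)) := by
            conv_lhs => rw [hs₁, hs₂]
            rw [TensorProduct.sum_tmul, map_sum]
            refine Finset.sum_congr rfl fun γ₁ _ => ?_
            rw [TensorProduct.tmul_sum, map_sum]
          rw [hxy]
          apply Finset.sum_induction _ Pt hPadd hP0
          intro γ₁ _
          apply Finset.sum_induction _ Pt hPadd hP0
          intro γ₂ _
          exact hPhom γ₁ γ₂ _ _ (A₁.proj_mem γ₁ x) (A₂.proj_mem γ₂ y)
    intro g t ht
    obtain ⟨s, w, hwW, hw0, hsum⟩ := hdec t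
    have h1 : T.proj g t = t := T.proj_of_mem_same ht
    have h2 : T.proj g t = ∑ γ ∈ s, T.proj g (w γ) := by
      conv_lhs => rw [hsum]
      exact map_sum _ _ _
    have h3 : ∀ γ ∈ s, γ ≠ g → T.proj g (w γ) = 0 :=
      fun γ _ hγ => T.proj_of_mem_ne (hWsub γ (hwW γ)) hγ
    by_cases hgs : g ∈ s
    · have h4 : T.proj g t = T.proj g (w g) := by
        rw [h2]
        exact Finset.sum_eq_single g (fun γ hγ hne => h3 γ hγ hne) (fun h => absurd hgs h)
      have hwt : t = w g := by
        rw [← h1, h4, T.proj_of_mem_same (hWsub g (hwW g))]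
      exact hmapW g t (hwt ▸ hwW g)
    · have h4 : T.proj g t = 0 := by
        rw [h2]
        exact Finset.sum_eq_zero fun γ hγ => h3 γ hγ (by rintro rfl; exact hgs hγ)
      rw [h1] at h4
      rw [h4, map_zero]
      exact (T'.gr g).zero_mem

  -- homotopy
  have hhtp : ∃ H : T.C →ₗ[F2U] T'.C,
      Fm ∘ₗ T.iota + T'.iota ∘ₗ Fm = T'.d ∘ₗ H + H ∘ₗ T.d := by
    set Hm : T.C →ₗ[F2U] T'.C := e'.symm.toLinearMap ∘ₗ
      (TensorProduct.map H₁ (F₂ ∘ₗ A₂.iota) + TensorProduct.map (B₁.iota ∘ₗ F₁) H₂)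
      ∘ₗ e.toLinearMap with hHm
    have hHsymm : ∀ u, Hm (e.symm u) = e'.symm ((TensorProduct.map H₁ (F₂ ∘ₗ A₂.iota)
        + TensorProduct.map (B₁.iota ∘ₗ F₁) H₂) u) := by
      intro u; simp [hHm]
    refine ⟨Hm, ?_⟩
    apply LinearMap.ext
    intro t
    obtain ⟨u, rfl⟩ : ∃ u, t = e.symm u := ⟨e t, (e.symm_apply_apply t).symm⟩
    simp only [LinearMap.comp_apply, LinearMap.add_apply]
    induction u using TensorProduct.induction_on with
    | zero => simp
    | add u v hu hv =>
        rw [map_add e.symm u v, map_add T.iota, map_add Fm, map_add Fm, map_add T'.iota,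
          map_add Hm, map_add T'.d, map_add T.d, map_add Hm,
          add_add_add_comm, hu, hv, add_add_add_comm]
    | tmul x y =>
        rw [hTi x y, hFtmul, hFtmul, hTi', hHsymm, hTd x y, hHsymm]
        simp only [LinearMap.add_apply, TensorProduct.map_tmul, LinearMap.comp_apply, map_add]
        rw [hTd' (H₁ x) (F₂ (A₂.iota y)), hTd' (B₁.iota (F₁ x)) (H₂ y)]
        apply e'.injective
        simp only [map_add, LinearEquiv.apply_symm_apply]
        have w₁ : F₁ (A₁.iota x) = B₁.d (H₁ x) + H₁ (A₁.d x) + B₁.iota (F₁ x) := by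
          have h0 := LinearMap.congr_fun hh₁ x
          simp only [LinearMap.add_apply, LinearMap.comp_apply] at h0
          rw [show F₁ (A₁.iota x) = (F₁ (A₁.iota x) + B₁.iota (F₁ x)) + B₁.iota (F₁ x) from by
            rw [add_assoc, add_self_zero, add_zero], h0]
        have w₂ : B₂.iota (F₂ y) = B₂.d (H₂ y) + H₂ (A₂.d y) + F₂ (A₂.iota y) := by
          have h0 := LinearMap.congr_fun hh₂ y
          simp only [LinearMap.add_apply, LinearMap.comp_apply] at h0
          rw [show B₂.iota (F₂ y) = (F₂ (A₂.iota y) + B₂.iota (F₂ y)) + F₂ (A₂.iota y) from by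
            rw [add_comm (F₂ (A₂.iota y)) (B₂.iota (F₂ y)), add_assoc, add_self_zero,
              add_zero], h0]
        have w₃ : B₂.d (F₂ (A₂.iota y)) = F₂ (A₂.iota (A₂.d y)) := by
          have ha := LinearMap.congr_fun hc₂ (A₂.iota y)
          have hb := LinearMap.congr_fun A₂.chain y
          simp only [LinearMap.comp_apply] at ha hb
          rw [← ha, hb]
        have w₄ : B₁.d (B₁.iota (F₁ x)) = B₁.iota (F₁ (A₁.d x)) := by
          have ha := LinearMap.congr_fun hc₁ x
          have hb := LinearMap.congr_fun B₁.chain (F₁ x)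
          simp only [LinearMap.comp_apply] at ha hb
          rw [hb, ← ha]
        rw [w₁, w₂, w₃, w₄]
        simp only [TensorProduct.add_tmul, TensorProduct.tmul_add]
        abel_nf
        simp only [two_nsmul_zero, two_zsmul_zero, add_zero, zero_add]

  -- nontorsion elements
  obtain ⟨g₁, z₁, hz₁g, hz₁c, hz₁n⟩ := A₁.exists_homog_nontorsion
  obtain ⟨g₂, z₂, hz₂g, hz₂c, hz₂n⟩ := A₂.exists_homog_nontorsion
  have hFz₁g : F₁ z₁ ∈ B₁.gr g₁ := hg₁ g₁ z₁ hz₁g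
  have hFz₂g : F₂ z₂ ∈ B₂.gr g₂ := hg₂ g₂ z₂ hz₂g
  have hFz₁c : B₁.d (F₁ z₁) = 0 := by
    have h0 := LinearMap.congr_fun hc₁ z₁
    simp only [LinearMap.comp_apply, hz₁c, map_zero] at h0
    exact h0.symm
  have hFz₂c : B₂.d (F₂ z₂) = 0 := by
    have h0 := LinearMap.congr_fun hc₂ z₂
    simp only [LinearMap.comp_apply, hz₂c, map_zero] at h0
    exact h0.symm
  have hFz₁n : ∀ n : ℕ, (X : F2U) ^ n • F₁ z₁ ∉ LinearMap.range B₁.d := by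
    intro n hn
    obtain ⟨m, hm⟩ := h4₁ ((X : F2U) ^ n • z₁) (by rw [map_smul, hz₁c, smul_zero])
      (by rw [map_smul]; exact hn)
    rw [smul_smul, ← pow_add] at hm
    exact hz₁n (m + n) hm
  have hFz₂n : ∀ n : ℕ, (X : F2U) ^ n • F₂ z₂ ∉ LinearMap.range B₂.d := by
    intro n hn
    obtain ⟨m, hm⟩ := h4₂ ((X : F2U) ^ n • z₂) (by rw [map_smul, hz₂c, smul_zero])
      (by rw [map_smul]; exact hn)
    rw [smul_smul, ← pow_add] at hm
    exact hz₂n (m + n) hm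
  set zst : T.C := e.symm (z₁ ⊗ₜ[F2U] z₂) with hzst
  have hzstc : T.d zst = 0 := by
    rw [hzst, hTd z₁ z₂, hz₁c, hz₂c]
    simp
  have hzstn : ∀ n : ℕ, (X : F2U) ^ n • zst ∉ LinearMap.range T.d :=
    tensor_nontorsion_transfer T A₁ A₂ e hTd z₁ (A₁.homog_ann hz₁g hz₁n)
      (A₁.tail_rel hz₁c hz₁n) z₂ hz₂c hz₂n
  have hFzst : Fm zst = e'.symm ((F₁ z₁) ⊗ₜ[F2U] (F₂ z₂)) := hFtmul z₁ z₂
  have hFzstc : T'.d (Fm zst) = 0 := by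
    rw [hFzst, hTd' (F₁ z₁) (F₂ z₂), hFz₁c, hFz₂c]
    simp
  have hFzstn : ∀ n : ℕ, (X : F2U) ^ n • Fm zst ∉ LinearMap.range T'.d := by
    intro n
    rw [hFzst]
    exact tensor_nontorsion_transfer T' B₁ B₂ e' hTd' (F₁ z₁) (B₁.homog_ann hFz₁g hFz₁n)
      (B₁.tail_rel hFz₁c hFz₁n) (F₂ z₂) hFz₂c hFz₂n n
  have hFzstg : Fm zst ∈ T'.gr (g₁ + g₂) := by
    rw [hFzst]
    exact hTg' g₁ g₂ _ _ hFz₁g hFz₂g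
  have hannF : ∀ r : F2U, r • Fm zst ∈ LinearMap.range T'.d → r = 0 :=
    T'.homog_ann hFzstg hFzstn
  refine ⟨Fm, hchain, hgr, hhtp, ?_, ?_⟩
  · -- injectivity on localized homology
    intro z hz hFz
    by_contra hzt
    push_neg at hzt
    obtain ⟨m, c, hmc⟩ := T.tail_rel hzstc hzstn z hz
    obtain ⟨u, hu⟩ := hmc
    have hcu := LinearMap.congr_fun hchain u
    simp only [LinearMap.comp_apply] at hcu
    have h6 : Fm ((X : F2U) ^ m • z + c • zst) ∈ LinearMap.range T'.d :=
      ⟨Fm u, by rw [← hcu, hu]⟩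
    rw [map_add, map_smul, map_smul] at h6
    have h7 : (X : F2U) ^ m • Fm z ∈ LinearMap.range T'.d := Submodule.smul_mem _ _ hFz
    have h8 : c • Fm zst ∈ LinearMap.range T'.d := by
      have h9 := Submodule.add_mem _ h6 h7
      rwa [add_comm ((X : F2U) ^ m • Fm z) (c • Fm zst), add_assoc, add_self_zero,
        add_zero] at h9
    have hc0 := hannF c h8
    rw [hc0, zero_smul, add_zero] at hu
    exact hzt m ⟨u, hu⟩
  · -- surjectivity on localized homology
    intro z' hz'
    obtain ⟨m, c, hmc⟩ := T'.tail_rel hFzstc hFzstn z' hz'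
    refine ⟨m, c • zst, ?_, ?_⟩
    · rw [map_smul, hzstc, smul_zero]
    · rw [map_smul]; exact hmc

/-- Let `(Cᵢ, ιᵢ)` and `(C'ᵢ, ι'ᵢ)`, `i = 1, 2`, be ι-complexes with
`(Cᵢ, ιᵢ)` locally equivalent to `(C'ᵢ, ι'ᵢ)` for each `i`.  Then the tensor products
`(C₁ ⊗_{𝔽₂[U]} C₂, ι₁⊗ι₂)` and `(C'₁ ⊗_{𝔽₂[U]} C'₂, ι'₁⊗ι'₂)` are locally
equivalent. -/
theorem local_equivalence_respects_tensor_products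
    (A₁ A₂ B₁ B₂ T T' : IotaCx)
    (h₁ : LocalEquiv A₁ B₁) (h₂ : LocalEquiv A₂ B₂)
    (hT : IsTensorOf T A₁ A₂) (hT' : IsTensorOf T' B₁ B₂) :
    LocalEquiv T T' := by
  obtain ⟨⟨F₁, hF₁⟩, ⟨G₁, hG₁⟩⟩ := h₁
  obtain ⟨⟨F₂, hF₂⟩, ⟨G₂, hG₂⟩⟩ := h₂
  exact ⟨tensor_local A₁ A₂ B₁ B₂ T T' F₁ F₂ hF₁ hF₂ hT hT',
         tensor_local B₁ B₂ A₁ A₂ T' T G₁ G₂ hG₁ hG₂ hT' hT⟩
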